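/- arXiv:2405.16614 — 2 statements merged into one kernel-verified Lean document; each statement's English description precedes it below -/
import Mathlib

section
/- Let 0 < β < 1, α > 0, λ > 0, and ξ > 0. Then ∫₀^∞ (e^{iξy} − 1)·α·e^{−λy}·y^{−1−β} dy = ∫₀^ξ (1/x)·( ∫₀^∞ (e^{ivx} − 1)·α·(β + λv)·v^{−1−β}·e^{−λv} dv ) dx, all integrals being absolutely convergent. -/
/-!
Write `k v = α v^{-β} e^{-λv}`: the Lévy density is `k y / y` and the background driving density
is `g = -k'`. Since `(e^{iξy} - 1) / y = ∫₀^ξ i e^{ixy} dx`, Fubini turns the left-hand side into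
`∫₀^ξ ∫₀^∞ i e^{ixv} k(v) dv dx`, and integration by parts identifies the inner integral with
`(1/x) ∫₀^∞ (e^{ixv} - 1) g(v) dv`; the boundary term `(e^{ixv} - 1) k(v)` is `O(v k(v))` at `0`
and `O(k(v))` at `∞`, so it vanishes at both ends.
-/

open MeasureTheory Set Filter Topology Complex

section SelfDecomposable

variable {k g : ℝ → ℝ}

lemma norm_cexp_I_mul_mul_sub_one_le (x v : ℝ) : ‖exp (I * x * v) - 1‖ ≤ |x| * |v| := by
  simpa [mul_assoc, abs_mul] using Real.norm_exp_I_mul_ofReal_sub_one_le (x := x * v)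

lemma norm_cexp_I_mul_mul (x v : ℝ) : ‖exp (I * x * v)‖ = 1 := by
  simp [norm_exp]

lemma norm_cexp_I_mul_mul_sub_one_le_two (x v : ℝ) : ‖exp (I * x * v) - 1‖ ≤ 2 := by
  simpa [norm_cexp_I_mul_mul, one_add_one_eq_two] using norm_sub_le (exp (I * x * v)) 1

lemma setIntegral_Ioc_I_mul_cexp_mul {ξ : ℝ} (hξ : 0 ≤ ξ) {v : ℝ} (hv : v ≠ 0) :
    ∫ x in Ioc (0 : ℝ) ξ, I * exp (I * x * v) = (exp (I * ξ * v) - 1) / v := by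
  have hIv : I * v ≠ 0 := mul_ne_zero I_ne_zero (ofReal_ne_zero.mpr hv)
  simp_rw [← intervalIntegral.integral_of_le hξ, intervalIntegral.integral_const_mul,
    mul_right_comm I _ (v : ℂ), integral_exp_mul_complex hIv]
  field_simp
  simp

lemma aestronglyMeasurable_of_hasDerivAt_neg (hderiv : ∀ v ∈ Ioi 0, HasDerivAt k (-g v) v) :
    AEStronglyMeasurable g (volume.restrict (Ioi 0)) := by
  refine (aestronglyMeasurable_deriv k _).neg.congr ?_
  filter_upwards [ae_restrict_mem measurableSet_Ioi] with v hv
  simp [(hderiv v hv).deriv]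

lemma norm_cexp_I_mul_mul_sub_one_mul_le (x v c : ℝ) :
    ‖(exp (I * x * v) - 1) * (c : ℂ)‖ ≤ |x| * ‖v * c‖ := by
  rw [norm_mul, norm_real, norm_mul, Real.norm_eq_abs v, ← mul_assoc]
  gcongr
  exact norm_cexp_I_mul_mul_sub_one_le x v

lemma integrableOn_cexp_sub_one_mul_div (hk : IntegrableOn k (Ioi 0)) (ξ : ℝ) :
    IntegrableOn (fun y : ℝ => (exp (I * ξ * y) - 1) * ((k y / y : ℝ) : ℂ)) (Ioi 0) := by
  refine Integrable.mono' (hk.norm.const_mul |ξ|) ?_ ?_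
  · exact (by fun_prop : Continuous fun y : ℝ => exp (I * ξ * y) - 1).aestronglyMeasurable.mul
      (continuous_ofReal.comp_aestronglyMeasurable (hk.1.div₀ aestronglyMeasurable_id))
  · filter_upwards [ae_restrict_mem measurableSet_Ioi] with y (hy : 0 < y)
    calc ‖(exp (I * ξ * y) - 1) * ((k y / y : ℝ) : ℂ)‖ ≤ |ξ| * ‖y * (k y / y)‖ :=
          norm_cexp_I_mul_mul_sub_one_mul_le ξ y (k y / y)
      _ = |ξ| * ‖k y‖ := by rw [mul_div_cancel₀ _ hy.ne']

lemma integrableOn_cexp_sub_one_mul (hg_meas : AEStronglyMeasurable g (volume.restrict (Ioi 0)))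
    (hg : IntegrableOn (fun v => v * g v) (Ioi 0)) (x : ℝ) :
    IntegrableOn (fun v : ℝ => (exp (I * x * v) - 1) * (g v : ℂ)) (Ioi 0) :=
  Integrable.mono' (hg.norm.const_mul |x|)
    ((by fun_prop : Continuous fun v : ℝ => exp (I * x * v) - 1).aestronglyMeasurable.mul
      (continuous_ofReal.comp_aestronglyMeasurable hg_meas))
    (Eventually.of_forall fun v => norm_cexp_I_mul_mul_sub_one_mul_le x v (g v))

lemma integrableOn_cexp_I_mul_mul_mul (hk : IntegrableOn k (Ioi 0)) (x : ℝ) :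
    IntegrableOn (fun v : ℝ => exp (I * x * v) * (k v : ℂ)) (Ioi 0) :=
  Integrable.mono' hk.norm
    ((by fun_prop : Continuous fun v : ℝ => exp (I * x * v)).aestronglyMeasurable.mul
      (continuous_ofReal.comp_aestronglyMeasurable hk.1))
    (Eventually.of_forall fun v => by simp [norm_cexp_I_mul_mul])

lemma integrable_prod_I_mul_cexp_mul (hk : IntegrableOn k (Ioi 0)) (ξ : ℝ) :
    Integrable (fun p : ℝ × ℝ => I * exp (I * p.1 * p.2) * (k p.2 : ℂ))
      ((volume.restrict (Ioc 0 ξ)).prod (volume.restrict (Ioi 0))) := by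
  have hbound : Integrable (fun p : ℝ × ℝ => (1 : ℝ) * ‖k p.2‖)
      ((volume.restrict (Ioc 0 ξ)).prod (volume.restrict (Ioi 0))) :=
    (integrableOn_const (C := (1 : ℝ)) measure_Ioc_lt_top.ne).mul_prod hk.norm
  refine hbound.mono' ?_ (Eventually.of_forall fun p => ?_)
  · exact (by fun_prop : Continuous fun p : ℝ × ℝ => I * exp (I * p.1 * p.2)
      ).aestronglyMeasurable.mul (continuous_ofReal.comp_aestronglyMeasurable hk.1.comp_snd)
  · simp [norm_cexp_I_mul_mul]

lemma integral_cexp_sub_one_mul_div_eq_integral_integral (hk : IntegrableOn k (Ioi 0))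
    {ξ : ℝ} (hξ : 0 ≤ ξ) :
    ∫ y in Ioi (0 : ℝ), (exp (I * ξ * y) - 1) * ((k y / y : ℝ) : ℂ)
      = ∫ x in Ioc (0 : ℝ) ξ, ∫ v in Ioi (0 : ℝ), I * exp (I * x * v) * (k v : ℂ) := by
  rw [integral_integral_swap (integrable_prod_I_mul_cexp_mul hk ξ)]
  refine setIntegral_congr_fun measurableSet_Ioi fun v (hv : 0 < v) => ?_
  rw [integral_mul_const, setIntegral_Ioc_I_mul_cexp_mul hξ hv.ne']
  push_cast
  ring

lemma integral_cexp_sub_one_mul_eq_I_mul_integral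
    (hderiv : ∀ v ∈ Ioi 0, HasDerivAt k (-g v) v)
    (hk : IntegrableOn k (Ioi 0)) (hg : IntegrableOn (fun v => v * g v) (Ioi 0))
    (hk_zero : Tendsto (fun v => v * k v) (𝓝[>] 0) (𝓝 0)) (hk_top : Tendsto k atTop (𝓝 0))
    (x : ℝ) :
    ∫ v in Ioi (0 : ℝ), (exp (I * x * v) - 1) * (g v : ℂ)
      = I * x * ∫ v in Ioi (0 : ℝ), exp (I * x * v) * (k v : ℂ) := by
  have hu : ∀ v ∈ Ioi (0 : ℝ), HasDerivAt (fun v : ℝ => exp (I * x * v) - 1)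
      (I * x * exp (I * x * v)) v := fun v _ => by
    have := (((hasDerivAt_id (v : ℂ)).const_mul (I * x)).comp_ofReal).cexp.sub_const 1
    simpa [mul_comm] using this
  have hw : ∀ v ∈ Ioi (0 : ℝ), HasDerivAt (fun v : ℝ => (k v : ℂ)) (-(g v : ℂ)) v :=
    fun v hv => by simpa using (hderiv v hv).ofReal_comp
  have huw' : IntegrableOn (fun v : ℝ => (exp (I * x * v) - 1) * -(g v : ℂ)) (Ioi 0) := by
    simpa using (integrableOn_cexp_sub_one_mul
      (aestronglyMeasurable_of_hasDerivAt_neg hderiv) hg x).neg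
  have hu'w : IntegrableOn (fun v : ℝ => I * x * exp (I * x * v) * (k v : ℂ)) (Ioi 0) :=
    ((integrableOn_cexp_I_mul_mul_mul hk x).const_mul (I * x)).congr
      (Eventually.of_forall fun v => (mul_assoc _ _ _).symm)
  have h_zero : Tendsto (fun v : ℝ => (exp (I * x * v) - 1) * (k v : ℂ)) (𝓝[>] 0) (𝓝 0) := by
    refine squeeze_zero_norm (a := fun v => |x| * ‖v * k v‖)
      (fun v => norm_cexp_I_mul_mul_sub_one_mul_le x v (k v)) ?_
    simpa using hk_zero.norm.const_mul |x|
  have h_top : Tendsto (fun v : ℝ => (exp (I * x * v) - 1) * (k v : ℂ)) atTop (𝓝 0) := by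
    refine squeeze_zero_norm (a := fun v => 2 * ‖k v‖) (fun v => ?_)
      (by simpa using hk_top.norm.const_mul 2)
    rw [norm_mul, norm_real]
    gcongr
    exact norm_cexp_I_mul_mul_sub_one_le_two x v
  have := integral_Ioi_mul_deriv_eq_deriv_mul hu hw huw' hu'w h_zero h_top
  simp only [mul_neg, integral_neg, sub_zero, zero_sub, neg_inj] at this
  rw [this, ← integral_const_mul]
  simp_rw [mul_assoc]

theorem integral_cexp_sub_one_mul_div_eq_integral_inv_mul
    (hderiv : ∀ v ∈ Ioi 0, HasDerivAt k (-g v) v)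
    (hk : IntegrableOn k (Ioi 0)) (hg : IntegrableOn (fun v => v * g v) (Ioi 0))
    (hk_zero : Tendsto (fun v => v * k v) (𝓝[>] 0) (𝓝 0)) (hk_top : Tendsto k atTop (𝓝 0))
    {ξ : ℝ} (hξ : 0 ≤ ξ) :
    IntegrableOn
      (fun x : ℝ => (1 / (x : ℂ)) * ∫ v in Ioi (0 : ℝ), (exp (I * x * v) - 1) * (g v : ℂ))
      (Ioc 0 ξ) ∧
    ∫ y in Ioi (0 : ℝ), (exp (I * ξ * y) - 1) * ((k y / y : ℝ) : ℂ)
      = ∫ x in Ioc (0 : ℝ) ξ,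
          (1 / (x : ℂ)) * ∫ v in Ioi (0 : ℝ), (exp (I * x * v) - 1) * (g v : ℂ) := by
  have hinner : ∀ x ∈ Ioc (0 : ℝ) ξ,
      ∫ v in Ioi (0 : ℝ), I * exp (I * x * v) * (k v : ℂ)
        = (1 / (x : ℂ)) * ∫ v in Ioi (0 : ℝ), (exp (I * x * v) - 1) * (g v : ℂ) := by
    intro x hx
    have hx' : (x : ℂ) ≠ 0 := ofReal_ne_zero.mpr hx.1.ne'
    rw [integral_cexp_sub_one_mul_eq_I_mul_integral hderiv hk hg hk_zero hk_top x]
    simp_rw [mul_assoc, integral_const_mul]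
    field_simp
  refine ⟨?_, ?_⟩
  · exact (integrable_prod_I_mul_cexp_mul hk ξ).integral_prod_left.congr
      ((ae_restrict_mem measurableSet_Ioc).mono hinner)
  · rw [integral_cexp_sub_one_mul_div_eq_integral_integral hk hξ]
    exact setIntegral_congr_fun measurableSet_Ioc hinner

end SelfDecomposable

section TemperedStable

variable {α β lam : ℝ}

lemma integrableOn_rpow_mul_exp_neg_mul {s b : ℝ} (hs : -1 < s) (hb : 0 < b) :
    IntegrableOn (fun v : ℝ => v ^ s * Real.exp (-b * v)) (Ioi 0) := by
  simpa using integrableOn_rpow_mul_exp_neg_mul_rpow hs zero_lt_one hb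

lemma hasDerivAt_mul_rpow_neg_mul_exp {v : ℝ} (hv : 0 < v) :
    HasDerivAt (fun v => α * v ^ (-β) * Real.exp (-lam * v))
      (-(α * (β + lam * v) * v ^ (-1 - β) * Real.exp (-lam * v))) v := by
  have hrpow := (Real.hasDerivAt_rpow_const (p := -β) (Or.inl hv.ne')).const_mul α
  have hexp := ((hasDerivAt_id v).const_mul (-lam)).exp
  refine (hrpow.mul hexp).congr_deriv ?_
  rw [show -β - 1 = -1 - β by ring, show -β = -1 - β + 1 by ring, Real.rpow_add_one hv.ne']
  simp only [id_eq, neg_mul, mul_one, mul_neg]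
  ring

lemma integrableOn_mul_rpow_neg_mul_exp (hβ : β < 1) (hlam : 0 < lam) :
    IntegrableOn (fun v => α * v ^ (-β) * Real.exp (-lam * v)) (Ioi 0) :=
  ((integrableOn_rpow_mul_exp_neg_mul (s := -β) (by linarith) hlam).const_mul α).congr
    (Eventually.of_forall fun v => (mul_assoc _ _ _).symm)

lemma integrableOn_mul_mul_add_mul_rpow_mul_exp (hβ : β < 1) (hlam : 0 < lam) :
    IntegrableOn (fun v => v * (α * (β + lam * v) * v ^ (-1 - β) * Real.exp (-lam * v)))
      (Ioi 0) := by
  have h : IntegrableOn (fun v => α * β * (v ^ (-β) * Real.exp (-lam * v))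
      + α * lam * (v ^ (1 - β) * Real.exp (-lam * v))) (Ioi 0) :=
    ((integrableOn_rpow_mul_exp_neg_mul (s := -β) (by linarith) hlam).const_mul (α * β)).add
      ((integrableOn_rpow_mul_exp_neg_mul (s := 1 - β) (by linarith) hlam).const_mul (α * lam))
  refine h.congr_fun (fun v (hv : 0 < v) => ?_) measurableSet_Ioi
  have e1 : v ^ (-β) = v ^ (-1 - β) * v := by
    rw [show -β = -1 - β + 1 by ring, Real.rpow_add_one hv.ne']
  have e2 : v ^ (1 - β) = v ^ (-1 - β) * v * v := by
    rw [show 1 - β = -1 - β + 1 + 1 by ring, Real.rpow_add_one hv.ne', Real.rpow_add_one hv.ne']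
  simp only [e1, e2]
  ring

lemma tendsto_mul_mul_rpow_neg_mul_exp_nhdsGT_zero (hβ : β < 1) :
    Tendsto (fun v => v * (α * v ^ (-β) * Real.exp (-lam * v))) (𝓝[>] 0) (𝓝 0) := by
  have hcont : ContinuousAt (fun v => α * v ^ (1 - β) * Real.exp (-lam * v)) 0 :=
    ((Real.continuousAt_rpow_const 0 (1 - β) (Or.inr (by linarith))).const_mul α).mul
      (by fun_prop)
  have h : Tendsto (fun v => α * v ^ (1 - β) * Real.exp (-lam * v)) (𝓝[>] 0) (𝓝 0) := by
    simpa [Real.zero_rpow (by linarith : 1 - β ≠ 0)] using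
      hcont.tendsto.mono_left nhdsWithin_le_nhds
  refine h.congr' (eventually_nhdsWithin_of_forall fun v (hv : 0 < v) => ?_)
  rw [show 1 - β = -β + 1 by ring, Real.rpow_add_one hv.ne']
  ring

lemma tendsto_mul_rpow_neg_mul_exp_atTop (hlam : 0 < lam) :
    Tendsto (fun v => α * v ^ (-β) * Real.exp (-lam * v)) atTop (𝓝 0) := by
  simpa [mul_assoc] using
    (tendsto_rpow_mul_exp_neg_mul_atTop_nhds_zero (-β) lam hlam).const_mul α

lemma mul_exp_mul_rpow_neg_one_sub {y : ℝ} (hy : 0 < y) :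
    α * Real.exp (-lam * y) * y ^ (-1 - β) = α * y ^ (-β) * Real.exp (-lam * y) / y := by
  rw [show -β = -1 - β + 1 by ring, Real.rpow_add_one hy.ne']
  field_simp

end TemperedStable

theorem tempered_stable_self_decomposable_general (β α lam ξ : ℝ) (hβ1 : β < 1)
    (hlam : 0 < lam) (hξ : 0 < ξ) :
    IntegrableOn (fun y : ℝ =>
        (Complex.exp (Complex.I * ξ * y) - 1) *
          ((α * Real.exp (-lam * y) * y ^ (-1 - β) : ℝ) : ℂ)) (Ioi 0) ∧
    (∀ x : ℝ, IntegrableOn (fun v : ℝ =>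
        (Complex.exp (Complex.I * x * v) - 1) *
          ((α * (β + lam * v) * v ^ (-1 - β) * Real.exp (-lam * v) : ℝ) : ℂ)) (Ioi 0)) ∧
    IntegrableOn (fun x : ℝ =>
        (1 / (x : ℂ)) * ∫ v in Ioi (0 : ℝ),
          (Complex.exp (Complex.I * x * v) - 1) *
            ((α * (β + lam * v) * v ^ (-1 - β) * Real.exp (-lam * v) : ℝ) : ℂ)) (Ioc 0 ξ) ∧
    ∫ y in Ioi (0 : ℝ),
        (Complex.exp (Complex.I * ξ * y) - 1) *
          ((α * Real.exp (-lam * y) * y ^ (-1 - β) : ℝ) : ℂ)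
      = ∫ x in Ioc (0 : ℝ) ξ,
          (1 / (x : ℂ)) * ∫ v in Ioi (0 : ℝ),
            (Complex.exp (Complex.I * x * v) - 1) *
              ((α * (β + lam * v) * v ^ (-1 - β) * Real.exp (-lam * v) : ℝ) : ℂ) := by
  have hderiv : ∀ v ∈ Ioi (0 : ℝ), HasDerivAt (fun v => α * v ^ (-β) * Real.exp (-lam * v))
      (-(α * (β + lam * v) * v ^ (-1 - β) * Real.exp (-lam * v))) v :=
    fun v hv => hasDerivAt_mul_rpow_neg_mul_exp hv
  have hk := integrableOn_mul_rpow_neg_mul_exp (α := α) hβ1 hlam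
  have hg := integrableOn_mul_mul_add_mul_rpow_mul_exp (α := α) hβ1 hlam
  have hlevy : EqOn
      (fun y : ℝ => (exp (I * ξ * y) - 1) * ((α * y ^ (-β) * Real.exp (-lam * y) / y : ℝ) : ℂ))
      (fun y : ℝ => (exp (I * ξ * y) - 1) * ((α * Real.exp (-lam * y) * y ^ (-1 - β) : ℝ) : ℂ))
      (Ioi 0) :=
    fun y hy => by simp only [mul_exp_mul_rpow_neg_one_sub hy]
  obtain ⟨hint, heq⟩ := integral_cexp_sub_one_mul_div_eq_integral_inv_mul hderiv hk hg
    (tendsto_mul_mul_rpow_neg_mul_exp_nhdsGT_zero hβ1) (tendsto_mul_rpow_neg_mul_exp_atTop hlam)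
    hξ.le
  refine ⟨(integrableOn_cexp_sub_one_mul_div hk ξ).congr_fun hlevy measurableSet_Ioi,
    integrableOn_cexp_sub_one_mul (aestronglyMeasurable_of_hasDerivAt_neg hderiv) hg, hint, ?_⟩
  rw [← setIntegral_congr_fun measurableSet_Ioi hlevy, heq]

/-- Self-decomposability identity for the one-sided tempered stable law: its characteristic
exponent equals `∫₀^ξ (log φ_Y(x)) dx/x` where `φ_Y` is the characteristic function of the
background driving Lévy process, all integrals being absolutely convergent. -/
theorem tempered_stable_self_decomposable (β α lam ξ : ℝ) (hβ0 : 0 < β) (hβ1 : β < 1)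
    (hα : 0 < α) (hlam : 0 < lam) (hξ : 0 < ξ) :
    IntegrableOn (fun y : ℝ =>
        (Complex.exp (Complex.I * ξ * y) - 1) *
          ((α * Real.exp (-lam * y) * y ^ (-1 - β) : ℝ) : ℂ)) (Ioi 0) ∧
    (∀ x : ℝ, IntegrableOn (fun v : ℝ =>
        (Complex.exp (Complex.I * x * v) - 1) *
          ((α * (β + lam * v) * v ^ (-1 - β) * Real.exp (-lam * v) : ℝ) : ℂ)) (Ioi 0)) ∧
    IntegrableOn (fun x : ℝ =>
        (1 / (x : ℂ)) * ∫ v in Ioi (0 : ℝ),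
          (Complex.exp (Complex.I * x * v) - 1) *
            ((α * (β + lam * v) * v ^ (-1 - β) * Real.exp (-lam * v) : ℝ) : ℂ)) (Ioc 0 ξ) ∧
    ∫ y in Ioi (0 : ℝ),
        (Complex.exp (Complex.I * ξ * y) - 1) *
          ((α * Real.exp (-lam * y) * y ^ (-1 - β) : ℝ) : ℂ)
      = ∫ x in Ioc (0 : ℝ) ξ,
          (1 / (x : ℂ)) * ∫ v in Ioi (0 : ℝ),
            (Complex.exp (Complex.I * x * v) - 1) *
              ((α * (β + lam * v) * v ^ (-1 - β) * Real.exp (-lam * v) : ℝ) : ℂ) :=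
  tempered_stable_self_decomposable_general β α lam ξ hβ1 hlam hξ
end

section
/- Let 0 < β₊ < 1, 0 < β₋ < 1, α₊, α₋ > 0, λ₊, λ₋ > 0, μ ∈ ℝ, and define Ψ : ℝ → ℂ by Ψ(u) = μui + α₊·Γ(−β₊)·((λ₊ − iu)^{β₊} − λ₊^{β₊}) + α₋·Γ(−β₋)·((λ₋ + iu)^{β₋} − λ₋^{β₋}), with cumulants κ₁ = μ + α₊·Γ(1−β₊)/λ₊^{1−β₊} − α₋·Γ(1−β₋)/λ₋^{1−β₋} and κ_k = α₊·Γ(k−β₊)/λ₊^{k−β₊} + (−1)^k·α₋·Γ(k−β₋)/λ₋^{k−β₋} for k ≥ 2. Then for every real ξ with |ξ| < min(λ₊, λ₋), the function u ↦ Ψ(u)/u is integrable on the interval between 0 and ξ and ∫₀^{ξ} Ψ(u)/u du = Σ_{k=1}^∞ (κ_k/k)·(iξ)^k/k!, the series converging absolutely; i.e., the k-th cumulant of the stationary Ornstein–Uhlenbeck law with GTS background driving Lévy process is κ_k/k. -/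
/-!
Both tempered stable parts of `Ψ` are holomorphic on the disc `|z| < λ±`, and the recursion
`Γ(s + 1) = s Γ(s)` turns their Taylor coefficients at `0` into `α± Γ(n - β±) / λ±^(n - β±)`;
hence `Ψ(u) = Σ_{n ≥ 1} κₙ (iu)ⁿ / n!` for `|u| < min(λ₊, λ₋)`. So `Ψ(u) / u` is a power series
which, converging at some radius beyond `|ξ|`, converges absolutely on `[-|ξ|, |ξ|]`; integrating
it termwise turns `κₙ` into `κₙ / n`.
-/

open MeasureTheory Set intervalIntegral

theorem iteratedDeriv_Gamma_mul_cpow_sub {β : ℝ} (hβ : ∀ n : ℕ, β ≠ n) (c : ℂ) (n : ℕ) :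
    EqOn (iteratedDeriv n fun z => (Real.Gamma (-β) : ℂ) * (c - z) ^ (β : ℂ))
      (fun z => (Real.Gamma (n - β) : ℂ) * (c - z) ^ ((β : ℂ) - n))
      {z | c - z ∈ Complex.slitPlane} := by
  have hopen : IsOpen {z | c - z ∈ Complex.slitPlane} :=
    Complex.isOpen_slitPlane.preimage (continuous_const.sub continuous_id)
  induction n with
  | zero => intro z _; simp
  | succ n ih =>
    intro z hz
    have hGamma : Real.Gamma ((n + 1 : ℕ) - β) = (n - β) * Real.Gamma (n - β) := by
      rw [Nat.cast_succ, add_sub_right_comm, Real.Gamma_add_one (sub_ne_zero.mpr (hβ n).symm)]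
    have hderiv := (((hasDerivAt_id' z).const_sub c).cpow_const (c := (β : ℂ) - n) hz).const_mul
      (Real.Gamma (n - β) : ℂ)
    rw [iteratedDeriv_succ, (Filter.eventuallyEq_of_mem (hopen.mem_nhds hz) ih).deriv_eq,
      hderiv.deriv, hGamma]
    push_cast
    ring_nf

lemma sub_mem_slitPlane_of_norm_lt {lam : ℝ} {z : ℂ} (hz : ‖z‖ < lam) :
    (lam : ℂ) - z ∈ Complex.slitPlane :=
  Or.inl <| by simpa using (Complex.re_le_norm z).trans_lt hz

noncomputable def temperedStableCumulant (α β lam : ℝ) (n : ℕ) : ℝ :=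
  α * Real.Gamma (n - β) / lam ^ ((n : ℝ) - β)

theorem hasSum_temperedStableCumulant {α β lam : ℝ} (hβ : ∀ n : ℕ, β ≠ n) (hlam : 0 < lam)
    {z : ℂ} (hz : ‖z‖ < lam) :
    HasSum (fun n => (temperedStableCumulant α β lam (n + 1) : ℂ) * z ^ (n + 1) /
        (n + 1).factorial)
      (α * Real.Gamma (-β) * (((lam : ℂ) - z) ^ (β : ℂ) - (lam : ℂ) ^ (β : ℂ))) := by
  have hball : Metric.ball (0 : ℂ) lam ⊆ {z | (lam : ℂ) - z ∈ Complex.slitPlane} := fun w hw =>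
    sub_mem_slitPlane_of_norm_lt (mem_ball_zero_iff.mp hw)
  have hf : DifferentiableOn ℂ (fun z => (Real.Gamma (-β) : ℂ) * ((lam : ℂ) - z) ^ (β : ℂ))
      (Metric.ball 0 lam) := fun w hw =>
    ((((hasDerivAt_id' w).const_sub _).cpow_const (hball hw)).const_mul _).differentiableAt
      |>.differentiableWithinAt
  have htaylor := (hasSum_nat_add_iff' 1).mpr
    (Complex.hasSum_taylorSeries_on_ball hf (mem_ball_zero_iff.mpr hz))
  convert htaylor.mul_left (α : ℂ) using 1
  · rfl
  · funext n
    have hpow : (lam : ℂ) ^ ((β : ℂ) - (n + 1 : ℕ)) = ((lam ^ (((n + 1 : ℕ) : ℝ) - β))⁻¹ : ℝ) := by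
      rw [← Real.rpow_neg hlam.le, neg_sub, Complex.ofReal_cpow hlam.le]
      push_cast
      rfl
    rw [iteratedDeriv_Gamma_mul_cpow_sub hβ _ (n + 1) (hball (Metric.mem_ball_self hlam))]
    simp only [smul_eq_mul, sub_zero, hpow, temperedStableCumulant]
    push_cast
    ring
  · simp only [Finset.sum_range_one, Nat.factorial_zero, Nat.cast_one, inv_one, pow_zero,
      iteratedDeriv_zero, one_smul, sub_zero]
    ring

/-- For `n ≥ 1`, the `n`-th cumulant of `GTS(μ, β₊, β₋, α₊, α₋, λ₊, λ₋)`. -/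
noncomputable def gtsCumulant (μ αp βp lamp αm βm lamm : ℝ) (n : ℕ) : ℝ :=
  (if n = 1 then μ else 0) + temperedStableCumulant αp βp lamp n
    + (-1) ^ n * temperedStableCumulant αm βm lamm n

theorem hasSum_gtsCumulant {μ αp βp lamp αm βm lamm : ℝ} (hβp : ∀ n : ℕ, βp ≠ n)
    (hβm : ∀ n : ℕ, βm ≠ n) (hlamp : 0 < lamp) (hlamm : 0 < lamm) {u : ℝ}
    (hu : |u| < min lamp lamm) :
    HasSum (fun n => (gtsCumulant μ αp βp lamp αm βm lamm (n + 1) * Complex.I ^ (n + 1)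
        / (n + 1).factorial : ℂ) * (u : ℂ) ^ (n + 1))
      ((μ * u : ℂ) * Complex.I
        + (αp : ℂ) * (Real.Gamma (-βp) : ℂ) *
            (((lamp : ℂ) - Complex.I * u) ^ (βp : ℂ) - (lamp : ℂ) ^ (βp : ℂ))
        + (αm : ℂ) * (Real.Gamma (-βm) : ℂ) *
            (((lamm : ℂ) + Complex.I * u) ^ (βm : ℂ) - (lamm : ℂ) ^ (βm : ℂ))) := by
  have hnorm : ‖Complex.I * u‖ = |u| := by simp
  have hp := hasSum_temperedStableCumulant (α := αp) hβp hlamp (z := Complex.I * u)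
    (by rw [hnorm]; exact hu.trans_le (min_le_left _ _))
  have hm := hasSum_temperedStableCumulant (α := αm) hβm hlamm (z := -(Complex.I * u))
    (by rw [norm_neg, hnorm]; exact hu.trans_le (min_le_right _ _))
  rw [sub_neg_eq_add] at hm
  convert ((hasSum_ite_eq 0 ((μ * u : ℂ) * Complex.I)).add hp).add hm using 1
  funext n
  rcases n with _ | n
  · rw [gtsCumulant, if_pos rfl, if_pos rfl]
    push_cast
    ring
  · rw [gtsCumulant, if_neg (by omega), if_neg (by omega)]
    push_cast
    ring

lemma HasSum.mul_pow_of_mul_pow_succ {c : ℕ → ℂ} {z s : ℂ}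
    (h : HasSum (fun n => c n * z ^ (n + 1)) s) (hz : z ≠ 0) :
    HasSum (fun n => c n * z ^ n) (s / z) := by
  simpa only [pow_succ, ← mul_assoc, mul_div_cancel_right₀ _ hz] using h.div_const z

theorem summable_norm_mul_pow_of_summable {𝕜 : Type*} [NormedField 𝕜] {a : ℕ → 𝕜} {z : 𝕜}
    (h : Summable fun n => a n * z ^ n) {r : ℝ} (hr0 : 0 ≤ r) (hr : r < ‖z‖) :
    Summable fun n => ‖a n‖ * r ^ n := by
  have hz : 0 < ‖z‖ := hr0.trans_lt hr
  have hq : Summable fun n => (r / ‖z‖) ^ n :=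
    summable_geometric_of_lt_one (by positivity) ((div_lt_one hz).2 hr)
  refine summable_of_isBigO_nat hq <|
    ((h.tendsto_atTop_zero.norm.isBigO_one ℝ).mul (Asymptotics.isBigO_refl _ Filter.atTop)).congr
      (fun n => ?_) fun n => one_mul _
  rw [norm_mul, norm_pow, div_pow, mul_assoc, mul_div_cancel₀ _ (pow_ne_zero n hz.ne')]

section TermwiseIntegration

variable {a : ℕ → ℂ} {f : ℝ → ℂ} {ξ : ℝ}

lemma norm_mul_ofReal_pow_le (c : ℂ) {u : ℝ} (hu : |u| ≤ |ξ|) (k : ℕ) :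
    ‖c * (u : ℂ) ^ k‖ ≤ ‖c‖ * |ξ| ^ k := by
  rw [norm_mul, norm_pow, Complex.norm_real, Real.norm_eq_abs]
  exact mul_le_mul_of_nonneg_left (pow_le_pow_left₀ (abs_nonneg u) hu k) (norm_nonneg c)

lemma abs_le_abs_of_mem_uIcc_zero {u : ℝ} (hu : u ∈ uIcc 0 ξ) : |u| ≤ |ξ| := by
  simpa using abs_sub_left_of_mem_uIcc hu

theorem intervalIntegrable_of_hasSum_pow (ha : Summable fun k => ‖a k‖ * |ξ| ^ k)
    (hf : ∀ u, u ≠ 0 → |u| ≤ |ξ| → HasSum (fun k => a k * (u : ℂ) ^ k) (f u)) :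
    IntervalIntegrable f volume 0 ξ := by
  have hcont : ContinuousOn (fun u : ℝ => ∑' k, a k * (u : ℂ) ^ k) (uIcc 0 ξ) :=
    continuousOn_tsum (fun k => by fun_prop) ha fun k u hu =>
      norm_mul_ofReal_pow_le (a k) (abs_le_abs_of_mem_uIcc_zero hu) k
  refine hcont.intervalIntegrable.congr_ae ?_
  filter_upwards [ae_restrict_mem measurableSet_uIoc, ae_restrict_of_ae (Measure.ae_ne volume 0)]
    with u hu hu0
  exact (hf u hu0 (abs_le_abs_of_mem_uIcc_zero (uIoc_subset_uIcc hu))).tsum_eq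

theorem hasSum_intervalIntegral_of_hasSum_pow (ha : Summable fun k => ‖a k‖ * |ξ| ^ k)
    (hf : ∀ u, u ≠ 0 → |u| ≤ |ξ| → HasSum (fun k => a k * (u : ℂ) ^ k) (f u)) :
    HasSum (fun k => a k * (ξ : ℂ) ^ (k + 1) / (k + 1)) (∫ u in 0..ξ, f u) := by
  have hint : ∀ k : ℕ, ∫ u in 0..ξ, a k * (u : ℂ) ^ k = a k * (ξ : ℂ) ^ (k + 1) / (k + 1) := by
    intro k
    simp_rw [intervalIntegral.integral_const_mul, ← Complex.ofReal_pow,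
      intervalIntegral.integral_ofReal, integral_pow]
    push_cast
    ring
  simp only [← hint]
  refine hasSum_integral_of_dominated_convergence (fun k _ => ‖a k‖ * |ξ| ^ k)
    (fun k => by fun_prop) (fun k => ae_of_all _ fun u hu => ?_) (ae_of_all _ fun _ _ => ha)
    intervalIntegrable_const ?_
  · exact norm_mul_ofReal_pow_le (a k) (abs_le_abs_of_mem_uIcc_zero (uIoc_subset_uIcc hu)) k
  · filter_upwards [Measure.ae_ne volume 0] with u hu0 hu
    exact hf u hu0 (abs_le_abs_of_mem_uIcc_zero (uIoc_subset_uIcc hu))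

theorem summable_norm_mul_pow_succ_div_of_summable (ha : Summable fun k => ‖a k‖ * |ξ| ^ k) :
    Summable fun k => ‖a k * (ξ : ℂ) ^ (k + 1) / (k + 1)‖ := by
  refine (ha.mul_right |ξ|).of_nonneg_of_le (fun _ => norm_nonneg _) fun k => ?_
  have hk : 1 ≤ ‖(k : ℂ) + 1‖ := by
    rw [← Nat.cast_add_one, Complex.norm_natCast]
    exact_mod_cast Nat.le_add_left 1 k
  calc ‖a k * (ξ : ℂ) ^ (k + 1) / (k + 1)‖ ≤ ‖a k * (ξ : ℂ) ^ (k + 1)‖ := by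
        rw [norm_div]; exact div_le_self (norm_nonneg _) hk
    _ ≤ ‖a k‖ * |ξ| ^ k * |ξ| := by
        rw [mul_assoc, ← pow_succ]; exact norm_mul_ofReal_pow_le _ le_rfl _

end TermwiseIntegration

lemma ne_natCast_of_pos_of_lt_one {β : ℝ} (h0 : 0 < β) (h1 : β < 1) (n : ℕ) : β ≠ n := by
  rcases n with _ | n
  · exact_mod_cast h0.ne'
  · exact (h1.trans_le (by simp)).ne

theorem OU_GTS_cumulant_series_general (βp βm αp αm lamp lamm μ : ℝ)
    (hβp0 : 0 < βp) (hβp1 : βp < 1) (hβm0 : 0 < βm) (hβm1 : βm < 1)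
    (hlamp : 0 < lamp) (hlamm : 0 < lamm)
    (Ψ : ℝ → ℂ)
    (hΨ : ∀ u : ℝ, Ψ u
      = (μ * u : ℂ) * Complex.I
        + (αp : ℂ) * (Real.Gamma (-βp) : ℂ) *
            (((lamp : ℂ) - Complex.I * u) ^ (βp : ℂ) - (lamp : ℂ) ^ (βp : ℂ))
        + (αm : ℂ) * (Real.Gamma (-βm) : ℂ) *
            (((lamm : ℂ) + Complex.I * u) ^ (βm : ℂ) - (lamm : ℂ) ^ (βm : ℂ)))
    (κ : ℕ → ℝ)
    (hκ1 : κ 1 = μ + αp * Real.Gamma (1 - βp) / lamp ^ (1 - βp)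
        - αm * Real.Gamma (1 - βm) / lamm ^ (1 - βm))
    (hκk : ∀ k : ℕ, 2 ≤ k →
      κ k = αp * Real.Gamma ((k : ℝ) - βp) / lamp ^ ((k : ℝ) - βp)
        + (-1 : ℝ) ^ k * αm * Real.Gamma ((k : ℝ) - βm) / lamm ^ ((k : ℝ) - βm)) :
    ∀ ξ : ℝ, |ξ| < min lamp lamm →
      IntervalIntegrable (fun u : ℝ => Ψ u / (u : ℂ)) volume 0 ξ ∧
      Summable (fun k : ℕ =>
        ‖((κ (k + 1) / ((k : ℝ) + 1) : ℝ) : ℂ) * (Complex.I * ξ) ^ (k + 1) /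
          ((k + 1).factorial : ℂ)‖) ∧
      ∫ u in (0 : ℝ)..ξ, Ψ u / (u : ℂ)
        = ∑' k : ℕ,
            ((κ (k + 1) / ((k : ℝ) + 1) : ℝ) : ℂ) * (Complex.I * ξ) ^ (k + 1) /
              ((k + 1).factorial : ℂ) := by
  intro ξ hξ
  have hκ : ∀ k : ℕ, κ (k + 1) = gtsCumulant μ αp βp lamp αm βm lamm (k + 1) := by
    rintro (_ | k)
    · rw [hκ1, gtsCumulant, if_pos rfl]
      simp only [temperedStableCumulant, zero_add, Nat.cast_one]
      ring
    · rw [hκk (k + 1 + 1) (by omega), gtsCumulant, if_neg (by omega)]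
      simp only [temperedStableCumulant]
      ring
  set a : ℕ → ℂ := fun k => κ (k + 1) * Complex.I ^ (k + 1) / (k + 1).factorial with ha_def
  have hseries : ∀ u : ℝ, u ≠ 0 → |u| < min lamp lamm →
      HasSum (fun k => a k * (u : ℂ) ^ k) (Ψ u / u) := by
    intro u hu0 hu
    simp only [ha_def, hκ, hΨ u]
    exact (hasSum_gtsCumulant (ne_natCast_of_pos_of_lt_one hβp0 hβp1)
      (ne_natCast_of_pos_of_lt_one hβm0 hβm1) hlamp hlamm hu).mul_pow_of_mul_pow_succ
      (Complex.ofReal_ne_zero.mpr hu0)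
  obtain ⟨r, hξr, hr⟩ := exists_between hξ
  have hr0 : 0 < r := (abs_nonneg ξ).trans_lt hξr
  have ha : Summable fun k => ‖a k‖ * |ξ| ^ k :=
    summable_norm_mul_pow_of_summable (hseries r hr0.ne' (by rwa [abs_of_pos hr0])).summable
      (abs_nonneg ξ) (by rwa [Complex.norm_real, Real.norm_of_nonneg hr0.le])
  have hf : ∀ u : ℝ, u ≠ 0 → |u| ≤ |ξ| → HasSum (fun k => a k * (u : ℂ) ^ k) (Ψ u / u) :=
    fun u hu0 hu => hseries u hu0 (hu.trans_lt hξ)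
  have hterm : ∀ k : ℕ, ((κ (k + 1) / ((k : ℝ) + 1) : ℝ) : ℂ) * (Complex.I * ξ) ^ (k + 1) /
      ((k + 1).factorial : ℂ) = a k * (ξ : ℂ) ^ (k + 1) / (k + 1) := by
    intro k
    simp only [ha_def]
    push_cast
    ring
  simp only [hterm]
  exact ⟨intervalIntegrable_of_hasSum_pow ha hf, summable_norm_mul_pow_succ_div_of_summable ha,
    (hasSum_intervalIntegral_of_hasSum_pow ha hf).tsum_eq.symm⟩

/-- Cumulants of the stationary Ornstein–Uhlenbeck law with GTS background driving Lévy
process: for `|ξ| < min(λ₊, λ₋)`, `∫₀^ξ Ψ(u)/u du = Σ_{k≥1} (κ_k/k) (iξ)^k / k!`,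
converging absolutely, where the `κ_k` are the cumulants of the GTS distribution. -/
theorem OU_GTS_cumulant_series (βp βm αp αm lamp lamm μ : ℝ)
    (hβp0 : 0 < βp) (hβp1 : βp < 1) (hβm0 : 0 < βm) (hβm1 : βm < 1)
    (hαp : 0 < αp) (hαm : 0 < αm) (hlamp : 0 < lamp) (hlamm : 0 < lamm)
    (Ψ : ℝ → ℂ)
    (hΨ : ∀ u : ℝ, Ψ u
      = (μ * u : ℂ) * Complex.I
        + (αp : ℂ) * (Real.Gamma (-βp) : ℂ) *
            (((lamp : ℂ) - Complex.I * u) ^ (βp : ℂ) - (lamp : ℂ) ^ (βp : ℂ))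
        + (αm : ℂ) * (Real.Gamma (-βm) : ℂ) *
            (((lamm : ℂ) + Complex.I * u) ^ (βm : ℂ) - (lamm : ℂ) ^ (βm : ℂ)))
    (κ : ℕ → ℝ)
    (hκ1 : κ 1 = μ + αp * Real.Gamma (1 - βp) / lamp ^ (1 - βp)
        - αm * Real.Gamma (1 - βm) / lamm ^ (1 - βm))
    (hκk : ∀ k : ℕ, 2 ≤ k →
      κ k = αp * Real.Gamma ((k : ℝ) - βp) / lamp ^ ((k : ℝ) - βp)
        + (-1 : ℝ) ^ k * αm * Real.Gamma ((k : ℝ) - βm) / lamm ^ ((k : ℝ) - βm)) :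
    ∀ ξ : ℝ, |ξ| < min lamp lamm →
      IntervalIntegrable (fun u : ℝ => Ψ u / (u : ℂ)) volume 0 ξ ∧
      Summable (fun k : ℕ =>
        ‖((κ (k + 1) / ((k : ℝ) + 1) : ℝ) : ℂ) * (Complex.I * ξ) ^ (k + 1) /
          ((k + 1).factorial : ℂ)‖) ∧
      ∫ u in (0 : ℝ)..ξ, Ψ u / (u : ℂ)
        = ∑' k : ℕ,
            ((κ (k + 1) / ((k : ℝ) + 1) : ℝ) : ℂ) * (Complex.I * ξ) ^ (k + 1) /
              ((k + 1).factorial : ℂ) :=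
  OU_GTS_cumulant_series_general βp βm αp αm lamp lamm μ hβp0 hβp1 hβm0 hβm1 hlamp hlamm Ψ hΨ κ hκ1
    hκk
end
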